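/- arXiv:2506.02340 — 2 statements merged into one kernel-verified Lean document; each statement's English description precedes it below -/
import Mathlib

section
/- For ε ∈ {±1}, define f_ε: ℤ → ℝ by f_ε(2n) = (−1/√6)(−ε√2)^{−n}, f_ε(2n+1) = (1/(2√3))(−ε√2)^{−n} for n ≥ 0, and f_ε(−m−1) = ε f_ε(m) for m ≥ 0. Then f_ε ∈ ℓ²(ℤ), ‖f_ε‖ = 1, and 𝓛^{pr} f_ε = λ_ε f_ε with λ_ε = (5−2ε)/4. -/
open Classical in
/-- Pointwise action of the projected normalized Laplacian `𝓛^{pr}` on `ℤ` (real version). -/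
noncomputable def lprFunR (g : ℤ → ℝ) (m : ℤ) : ℝ :=
  if 0 ≤ m then
    if Even m then
      g m - (1/2) * g (m - 1) - (1 / (2 * Real.sqrt 2)) * g (m + 1)
    else
      (3/4) * g m - (1 / (2 * Real.sqrt 2)) * g (m - 1) - (1/2) * g (m + 1)
  else
    if Even (-m - 1) then
      g m - (1/2) * g (m + 1) - (1 / (2 * Real.sqrt 2)) * g (m - 1)
    else
      (3/4) * g m - (1 / (2 * Real.sqrt 2)) * g (m + 1) - (1/2) * g (m - 1)

open Classical in
/-- The eigenfunction `f_ε` on nonnegative arguments: `f_ε(2n) = (-1/√6)(-ε√2)^{-n}`,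
`f_ε(2n+1) = (1/(2√3))(-ε√2)^{-n}`. -/
noncomputable def discEigBase (ε : ℝ) (m : ℤ) : ℝ :=
  if Even m then (-1 / Real.sqrt 6) * (-ε * Real.sqrt 2) ^ (-(m / 2))
  else (1 / (2 * Real.sqrt 3)) * (-ε * Real.sqrt 2) ^ (-((m - 1) / 2))

open Classical in
/-- `f_ε`, extended to negative arguments by `f_ε(-m-1) = ε f_ε(m)`. -/
noncomputable def discEig (ε : ℝ) (m : ℤ) : ℝ :=
  if 0 ≤ m then discEigBase ε m else ε * discEigBase ε (-m - 1)

/-!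
On `m ≥ 0`, `f_ε` is geometric with ratio `(-ε√2)⁻¹` along each parity class, so the eigenvalue
equation at an even and at an odd site reduces to one identity each between the amplitudes
`-1/√6` and `1/(2√3)`. The reflection rule gives `f_ε(-1) = ε f_ε(0)`, which continues the odd
pattern to `m = -1`, so `m = 0` is no exception. The operator commutes with `m ↦ -m-1`, which
transports the equation to `m < 0`. For the norm, `f_ε(2k)² = 2⁻ᵏ/6` and `f_ε(2k+1)² = 2⁻ᵏ/12`,
so each half-line carries `1/3 + 1/6 = 1/2`.
-/

theorem lp.norm_two_eq_sqrt_of_hasSum {ι : Type*} {E : ι → Type*}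
    [∀ i, NormedAddCommGroup (E i)] (f : lp E 2) {s : ℝ} (hf : HasSum (fun i => ‖f i‖ ^ 2) s) :
    ‖f‖ = √s := by
  rw [lp.norm_eq_tsum_rpow (by norm_num), ENNReal.toReal_ofNat, Real.sqrt_eq_rpow]
  simp only [Real.rpow_two, hf.tsum_eq]

theorem memℓp_two_of_summable_sq {ι : Type*} {E : ι → Type*} [∀ i, NormedAddCommGroup (E i)]
    {f : ∀ i, E i} (hf : Summable fun i => ‖f i‖ ^ 2) : Memℓp f 2 :=
  memℓp_gen (by simpa only [ENNReal.toReal_ofNat, Real.rpow_two] using hf)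

section Operator

variable (g : ℤ → ℝ)

theorem lprFunR_two_mul {k : ℤ} (hk : 0 ≤ k) :
    lprFunR g (2 * k) =
      g (2 * k) - 1 / 2 * g (2 * (k - 1) + 1) - 1 / (2 * √2) * g (2 * k + 1) := by
  rw [lprFunR, if_pos (by omega), if_pos (even_two_mul k), show 2 * k - 1 = 2 * (k - 1) + 1 by ring]

theorem lprFunR_two_mul_add_one {k : ℤ} (hk : 0 ≤ k) :
    lprFunR g (2 * k + 1) =
      3 / 4 * g (2 * k + 1) - 1 / (2 * √2) * g (2 * k) - 1 / 2 * g (2 * (k + 1)) := by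
  rw [lprFunR, if_pos (by omega), if_neg (Int.not_even_iff_odd.2 (odd_two_mul_add_one k)),
    add_sub_cancel_right, show 2 * k + 1 + 1 = 2 * (k + 1) by ring]

theorem lprFunR_const_mul (c : ℝ) (m : ℤ) :
    lprFunR (fun n => c * g n) m = c * lprFunR g m := by
  unfold lprFunR
  split_ifs <;> ring

theorem lprFunR_neg_sub_one (m : ℤ) :
    lprFunR g (-m - 1) = lprFunR (fun n => g (-n - 1)) m := by
  unfold lprFunR
  by_cases hm : 0 ≤ m
  · rw [if_neg (by omega), if_pos hm, neg_sub, sub_sub_cancel_left, neg_neg]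
    ring_nf
  · rw [if_pos (by omega), if_neg hm]
    ring_nf

theorem lprFunR_neg_sub_one_of_reflect {ε : ℝ} (hg : ∀ n, g (-n - 1) = ε * g n) (m : ℤ) :
    lprFunR g (-m - 1) = ε * lprFunR g m := by
  rw [lprFunR_neg_sub_one, funext hg, lprFunR_const_mul]

end Operator

section Eigenfunction

theorem sqrt_six_eq_sqrt_two_mul_sqrt_three : √6 = √2 * √3 := by
  rw [← Real.sqrt_mul zero_le_two]; norm_num

variable {ε : ℝ}

theorem neg_mul_sqrt_two_sq (hε : ε ^ 2 = 1) : (-ε * √2) ^ 2 = 2 := by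
  rw [mul_pow, neg_sq, hε, Real.sq_sqrt zero_le_two, one_mul]

theorem discEig_two_mul {k : ℤ} (hk : 0 ≤ k) :
    discEig ε (2 * k) = -1 / √6 * (-ε * √2) ^ (-k) := by
  rw [discEig, discEigBase, if_pos (by omega), if_pos (even_two_mul k),
    Int.mul_ediv_cancel_left _ two_ne_zero]

theorem discEig_two_mul_add_one {k : ℤ} (hk : -1 ≤ k) :
    discEig ε (2 * k + 1) = 1 / (2 * √3) * (-ε * √2) ^ (-k) := by
  obtain hk | rfl := hk.lt_or_eq
  · rw [discEig, discEigBase, if_pos (by omega),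
      if_neg (Int.not_even_iff_odd.2 (odd_two_mul_add_one k)), add_sub_cancel_right,
      Int.mul_ediv_cancel_left _ two_ne_zero]
  · norm_num [discEig, discEigBase, sqrt_six_eq_sqrt_two_mul_sqrt_three]
    field_simp
    linear_combination ε * Real.sq_sqrt (zero_le_two (α := ℝ))

theorem discEig_neg_sub_one (hε : ε ^ 2 = 1) (k : ℤ) :
    discEig ε (-k - 1) = ε * discEig ε k := by
  unfold discEig
  by_cases hk : 0 ≤ k
  · rw [if_neg (by omega), if_pos hk, neg_sub, sub_sub_cancel_left, neg_neg]
  · rw [if_pos (by omega), if_neg hk]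
    linear_combination -discEigBase ε (-k - 1) * hε

theorem lprFunR_discEig_of_nonneg (hε : ε ^ 2 = 1) {m : ℤ} (hm : 0 ≤ m) :
    lprFunR (discEig ε) m = (5 - 2 * ε) / 4 * discEig ε m := by
  have hr : -ε * √2 ≠ 0 := ne_zero_pow two_ne_zero (by rw [neg_mul_sqrt_two_sq hε]; norm_num)
  have h2 : √2 ^ 2 = 2 := Real.sq_sqrt zero_le_two
  obtain ⟨k, rfl | rfl⟩ := Int.even_or_odd' m
  · rw [lprFunR_two_mul _ (by omega), discEig_two_mul (by omega),
      discEig_two_mul_add_one (by omega), discEig_two_mul_add_one (by omega),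
      show -(k - 1) = 1 + -k by ring, zpow_add₀ hr, zpow_one, sqrt_six_eq_sqrt_two_mul_sqrt_three]
    generalize (-ε * √2) ^ (-k) = R
    field_simp
    linear_combination 4 * ε * R * h2
  · rw [lprFunR_two_mul_add_one _ (by omega), discEig_two_mul_add_one (by omega),
      discEig_two_mul (by omega), discEig_two_mul (by omega),
      show -k = 1 + -(k + 1) by ring, zpow_add₀ hr, zpow_one, sqrt_six_eq_sqrt_two_mul_sqrt_three]
    generalize (-ε * √2) ^ (-(k + 1)) = R
    field_simp
    linear_combination R * ((2 * ε - 2 * ε ^ 2) * h2 - 4 * hε)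

theorem lprFunR_discEig (hε : ε ^ 2 = 1) (m : ℤ) :
    lprFunR (discEig ε) m = (5 - 2 * ε) / 4 * discEig ε m := by
  obtain hm | hm := le_or_gt 0 m
  · exact lprFunR_discEig_of_nonneg hε hm
  · obtain ⟨n, hn, rfl⟩ : ∃ n, 0 ≤ n ∧ m = -n - 1 := ⟨-m - 1, by omega, by ring⟩
    rw [lprFunR_neg_sub_one_of_reflect _ (discEig_neg_sub_one hε), discEig_neg_sub_one hε,
      lprFunR_discEig_of_nonneg hε hn]
    ring

theorem neg_mul_sqrt_two_zpow_neg_sq (hε : ε ^ 2 = 1) (k : ℕ) :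
    ((-ε * √2) ^ (-(k : ℤ))) ^ 2 = (1 / 2) ^ k := by
  rw [zpow_neg, zpow_natCast, inv_pow, ← pow_mul, mul_comm k 2, pow_mul, neg_mul_sqrt_two_sq hε,
    one_div, inv_pow]

theorem discEig_sq_two_mul (hε : ε ^ 2 = 1) (k : ℕ) :
    discEig ε (2 * k) ^ 2 = 1 / 6 * (1 / 2) ^ k := by
  rw [discEig_two_mul (by positivity), mul_pow, neg_mul_sqrt_two_zpow_neg_sq hε, div_pow,
    Real.sq_sqrt (by norm_num)]
  norm_num

theorem discEig_sq_two_mul_add_one (hε : ε ^ 2 = 1) (k : ℕ) :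
    discEig ε (2 * k + 1) ^ 2 = 1 / 12 * (1 / 2) ^ k := by
  rw [discEig_two_mul_add_one (by omega), mul_pow, neg_mul_sqrt_two_zpow_neg_sq hε, div_pow,
    mul_pow, Real.sq_sqrt (by norm_num)]
  norm_num

theorem hasSum_discEig_sq_natCast (hε : ε ^ 2 = 1) :
    HasSum (fun n : ℕ => discEig ε n ^ 2) (1 / 2) := by
  have hgeom := hasSum_geometric_of_lt_one (r := (1 / 2 : ℝ)) (by norm_num) (by norm_num)
  have heven : HasSum (fun k : ℕ => discEig ε ↑(2 * k) ^ 2) (1 / 3) := by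
    simp only [Nat.cast_mul, Nat.cast_ofNat, discEig_sq_two_mul hε]
    rw [show (1 / 3 : ℝ) = 1 / 6 * (1 - 1 / 2)⁻¹ by norm_num]
    exact hgeom.mul_left _
  have hodd : HasSum (fun k : ℕ => discEig ε ↑(2 * k + 1) ^ 2) (1 / 6) := by
    simp only [Nat.cast_add, Nat.cast_mul, Nat.cast_ofNat, Nat.cast_one,
      discEig_sq_two_mul_add_one hε]
    rw [show (1 / 6 : ℝ) = 1 / 12 * (1 - 1 / 2)⁻¹ by norm_num]
    exact hgeom.mul_left _
  rw [show (1 / 2 : ℝ) = 1 / 3 + 1 / 6 by norm_num]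
  exact HasSum.even_add_odd (f := fun n : ℕ => discEig ε n ^ 2) heven hodd

theorem hasSum_discEig_sq (hε : ε ^ 2 = 1) : HasSum (fun m : ℤ => discEig ε m ^ 2) 1 := by
  have hnat := hasSum_discEig_sq_natCast hε
  have hneg : HasSum (fun n : ℕ => discEig ε (-(n + 1)) ^ 2) (1 / 2) := by
    simpa only [neg_add', discEig_neg_sub_one hε, mul_pow, hε, one_mul] using hnat
  rw [show (1 : ℝ) = 1 / 2 + 1 / 2 by norm_num]
  exact HasSum.of_nat_of_neg_add_one (f := fun m : ℤ => discEig ε m ^ 2) hnat hneg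

end Eigenfunction

theorem discrete_eigenfunctions (ε : ℝ) (hε : ε = 1 ∨ ε = -1) :
    Memℓp (fun m : ℤ => discEig ε m) 2 ∧
    (∃ F : lp (fun _ : ℤ => ℝ) 2,
      (∀ m : ℤ, (F : ∀ _ : ℤ, ℝ) m = discEig ε m) ∧ ‖F‖ = 1) ∧
    (∀ m : ℤ, lprFunR (discEig ε) m = ((5 - 2 * ε) / 4) * discEig ε m) := by
  have hε2 : ε ^ 2 = 1 := by rcases hε with rfl | rfl <;> norm_num
  have hsum : HasSum (fun m : ℤ => ‖discEig ε m‖ ^ 2) 1 := by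
    simpa only [Real.norm_eq_abs, sq_abs] using hasSum_discEig_sq hε2
  have hmem : Memℓp (discEig ε) 2 := memℓp_two_of_summable_sq hsum.summable
  refine ⟨hmem, ⟨⟨_, hmem⟩, fun _ => rfl, ?_⟩, lprFunR_discEig hε2⟩
  rw [lp.norm_two_eq_sqrt_of_hasSum (⟨_, hmem⟩ : lp (fun _ : ℤ => ℝ) 2) hsum, Real.sqrt_one]
end

section
/- For x ∈ (0,π), the function g(x) := c₁ + c₂ + 2cos(x)·c₃, where c₁ = (1+ε/4−εμR)(1+ε/4−εμ'R) + 1/2, c₂ = (μR+1/4−ε)(μ'R+1/4−ε) + 1/2, c₃ = √2 − (ε/√2)(μ+μ')R, and R² = 25/16 + √2·cos(x), satisfies: g = 0 if μ = −μ', and g = 2R(2R − εμ(2+√2·cos x)) if μ = μ'. Moreover 2R(2R − ε'(2+√2 cos x)) > 0 for any ε' ∈ {±1}. -/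
/-!
Expanding with `ε² = 1` and `√2² = 2` gives
`g = 2μμ'R² + 25/8 + 2√2 cos x - ε(μ+μ')R(2 + √2 cos x)`, and `25/8 + 2√2 cos x = 2R²`, so
`g = 2(1 + μμ')R² - ε(μ+μ')R(2 + √2 cos x)`.
Positivity holds because `(2R)² = 25/4 + 4√2 cos x > (2 + √2 cos x)²`, i.e. `2 cos² x < 9/4`,
so `2R > |2 + √2 cos x|`.
-/

open Real

lemma orthogonality_sum_eq {s c R ε μ μ' : ℝ} (hs : s ^ 2 = 2) (hε : ε ^ 2 = 1)
    (hR : R ^ 2 = 25 / 16 + s * c) :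
    (1 + ε / 4 - ε * μ * R) * (1 + ε / 4 - ε * μ' * R) + 1 / 2
        + ((μ * R + 1 / 4 - ε) * (μ' * R + 1 / 4 - ε) + 1 / 2)
        + 2 * c * (s - (ε / s) * (μ + μ') * R)
      = 2 * (1 + μ * μ') * R ^ 2 - ε * (μ + μ') * R * (2 + s * c) := by
  have hs0 : s ≠ 0 := by rintro rfl; norm_num at hs
  have hdiv : ε / s = ε * s / 2 := by rw [div_eq_div_iff hs0 two_ne_zero, mul_assoc, ← sq, hs]
  rw [hdiv]
  linear_combination (μ * μ' * R ^ 2 + 17 / 16 - (μ + μ') * R / 4) * hε - 2 * hR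

lemma twentyFive_div_sixteen_add_sqrt_two_mul_pos {c : ℝ} (hc : |c| ≤ 1) :
    0 < 25 / 16 + √2 * c := by
  have hs_lt : √2 < 25 / 16 := by rw [sqrt_lt' (by norm_num)]; norm_num
  have hsc : |√2 * c| ≤ √2 := by
    rw [abs_mul, abs_of_nonneg (sqrt_nonneg 2)]; exact mul_le_of_le_one_right (sqrt_nonneg 2) hc
  linarith [neg_abs_le (√2 * c)]

lemma abs_two_add_sqrt_two_mul_lt {c : ℝ} (hc : |c| ≤ 1) :
    |2 + √2 * c| < 2 * √(25 / 16 + √2 * c) := by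
  have hs : √2 ^ 2 = 2 := sq_sqrt zero_le_two
  have hc_sq : c ^ 2 ≤ 1 := (sq_le_one_iff_abs_le_one c).mpr hc
  have hrad := (twentyFive_div_sixteen_add_sqrt_two_mul_pos hc).le
  refine abs_lt_of_sq_lt_sq ?_ (by positivity)
  calc (2 + √2 * c) ^ 2 = 4 + 4 * √2 * c + 2 * c ^ 2 := by linear_combination c ^ 2 * hs
    _ < 4 * (25 / 16 + √2 * c) := by linarith
    _ = (2 * √(25 / 16 + √2 * c)) ^ 2 := by rw [mul_pow, sq_sqrt hrad]; norm_num

lemma mul_sub_mul_pos_of_abs_lt {a b e : ℝ} (hab : |a| < b) (he : e = 1 ∨ e = -1) :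
    0 < b * (b - e * a) := by
  obtain ⟨hlo, hhi⟩ := abs_lt.mp hab
  rcases he with rfl | rfl <;> exact mul_pos (by linarith) (by linarith)

theorem orthogonality_core_general (x μ μ' ε : ℝ)
    (hμ' : μ' = 1 ∨ μ' = -1) (hε : ε = 1 ∨ ε = -1) :
    let R := Real.sqrt (25/16 + Real.sqrt 2 * Real.cos x)
    let c1 := (1 + ε/4 - ε * μ * R) * (1 + ε/4 - ε * μ' * R) + 1/2
    let c2 := (μ * R + 1/4 - ε) * (μ' * R + 1/4 - ε) + 1/2
    let c3 := Real.sqrt 2 - (ε / Real.sqrt 2) * (μ + μ') * R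
    let g := c1 + c2 + 2 * Real.cos x * c3
    (μ = -μ' → g = 0) ∧
    (μ = μ' → g = 2 * R * (2 * R - ε * μ * (2 + Real.sqrt 2 * Real.cos x))) ∧
    (∀ ε' : ℝ, (ε' = 1 ∨ ε' = -1) →
      0 < 2 * R * (2 * R - ε' * (2 + Real.sqrt 2 * Real.cos x))) := by
  intro R c1 c2 c3 g
  have hR_lt := abs_two_add_sqrt_two_mul_lt (abs_cos_le_one x)
  have hR : R ^ 2 = 25 / 16 + √2 * cos x :=
    sq_sqrt (twentyFive_div_sixteen_add_sqrt_two_mul_pos (abs_cos_le_one x)).le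
  have hg : g = 2 * (1 + μ * μ') * R ^ 2 - ε * (μ + μ') * R * (2 + √2 * cos x) :=
    orthogonality_sum_eq (sq_sqrt zero_le_two) (sq_eq_one_iff.mpr hε) hR
  have hμ'_sq : μ' ^ 2 = 1 := sq_eq_one_iff.mpr hμ'
  refine ⟨fun h => ?_, fun h => ?_, fun ε' hε' => mul_sub_mul_pos_of_abs_lt hR_lt hε'⟩
  · rw [hg, h]; linear_combination (-2 * R ^ 2) * hμ'_sq
  · rw [hg, h]; linear_combination (2 * R ^ 2) * hμ'_sq

theorem orthogonality_core (x μ μ' ε : ℝ) (hx : x ∈ Set.Ioo 0 Real.pi)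
    (hμ : μ = 1 ∨ μ = -1) (hμ' : μ' = 1 ∨ μ' = -1) (hε : ε = 1 ∨ ε = -1) :
    let R := Real.sqrt (25/16 + Real.sqrt 2 * Real.cos x)
    let c1 := (1 + ε/4 - ε * μ * R) * (1 + ε/4 - ε * μ' * R) + 1/2
    let c2 := (μ * R + 1/4 - ε) * (μ' * R + 1/4 - ε) + 1/2
    let c3 := Real.sqrt 2 - (ε / Real.sqrt 2) * (μ + μ') * R
    let g := c1 + c2 + 2 * Real.cos x * c3
    (μ = -μ' → g = 0) ∧
    (μ = μ' → g = 2 * R * (2 * R - ε * μ * (2 + Real.sqrt 2 * Real.cos x))) ∧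
    (∀ ε' : ℝ, (ε' = 1 ∨ ε' = -1) →
      0 < 2 * R * (2 * R - ε' * (2 + Real.sqrt 2 * Real.cos x))) :=
  orthogonality_core_general x μ μ' ε hμ' hε
end
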